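/- arXiv:1503.05325 — 2 statements merged into one kernel-verified Lean document; each statement's English description precedes it below -/
import Mathlib

section
/- Let χ : ZMod 3 → ℂ with Σ_k |χ_k|² = 1, let {|a_k⟩}, {|b_k⟩} be orthonormal bases of ℂ³, and set |ψ'_m⟩ = Σ_k χ_{k−m} |η_k⟩ where |η_k⟩ = (1/√3) Σ_j |a_j⟩ ⊗ |b_{k−j}⟩. Then Tr_A(|ψ'_m⟩⟨ψ'_m|) is the same operator for all m ∈ ZMod 3, and likewise Tr_B(|ψ'_m⟩⟨ψ'_m|) is independent of m. -/
open scoped BigOperators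
open Matrix

/-- Orthonormal basis condition for a family of three vectors of `ℂ³`. -/
def IsONB3 (a : ZMod 3 → ZMod 3 → ℂ) : Prop :=
  ∀ j k, star (a j) ⬝ᵥ a k = if j = k then 1 else 0

/-- Tensor product of vectors of `ℂ³`. -/
def tensV (v w : ZMod 3 → ℂ) : ZMod 3 × ZMod 3 → ℂ := fun p => v p.1 * w p.2

/-- `|η_k⟩ = (1/√3) Σ_j |a_j⟩ ⊗ |b_{k−j}⟩`. -/
noncomputable def eta3 (a b : ZMod 3 → ZMod 3 → ℂ) (k : ZMod 3) : ZMod 3 × ZMod 3 → ℂ :=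
  ((Real.sqrt 3 : ℂ))⁻¹ • ∑ j : ZMod 3, tensV (a j) (b (k - j))

/-- `|ψ'_m⟩ = Σ_k χ_{k−m} |η_k⟩`. -/
noncomputable def psi' (χ : ZMod 3 → ℂ) (a b : ZMod 3 → ZMod 3 → ℂ) (m : ZMod 3) :
    ZMod 3 × ZMod 3 → ℂ :=
  ∑ k : ZMod 3, χ (k - m) • eta3 a b k

/-- Partial trace over the first tensor factor. -/
noncomputable def ptrA (M : Matrix (ZMod 3 × ZMod 3) (ZMod 3 × ZMod 3) ℂ) :
    Matrix (ZMod 3) (ZMod 3) ℂ :=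
  Matrix.of fun j j' => ∑ i : ZMod 3, M (i, j) (i, j')

/-- Partial trace over the second tensor factor. -/
noncomputable def ptrB (M : Matrix (ZMod 3 × ZMod 3) (ZMod 3 × ZMod 3) ℂ) :
    Matrix (ZMod 3) (ZMod 3) ℂ :=
  Matrix.of fun i i' => ∑ j : ZMod 3, M (i, j) (i', j)

/-! In the bases `a` and `b`, `ψ'_m` has the coefficient matrix `C_m l n = χ (l + n - m) / √3`,
so its amplitude matrix is `Ψ_m = A C_m Bᵀ` with `A`, `B` unitary. The two reduced states are
`(Ψ_mᴴ Ψ_m)ᵀ` and `Ψ_m Ψ_mᴴ`, in which the unitaries on the traced-out side cancel, leaving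
`C_mᴴ C_m` and `C_m C_mᴴ`. Since `C_m` is `C_0` with its rows, or equally its columns, cyclically
shifted by `m`, neither product depends on `m`. -/

namespace Matrix

variable {l m n α : Type*}

theorem conjTranspose_mul_self_submatrix_equiv [Fintype l] [Fintype m] [Semiring α]
    [StarRing α] (C : Matrix m n α) (e : l ≃ m) :
    (C.submatrix e id)ᴴ * C.submatrix e id = Cᴴ * C := by
  rw [conjTranspose_submatrix, submatrix_mul_equiv, submatrix_id_id]

theorem mul_conjTranspose_self_submatrix_equiv [Fintype l] [Fintype n] [Semiring α]
    [StarRing α] (C : Matrix m n α) (e : l ≃ n) :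
    C.submatrix id e * (C.submatrix id e)ᴴ = C * Cᴴ := by
  rw [conjTranspose_submatrix, submatrix_mul_equiv, submatrix_id_id]

theorem conjTranspose_mul_self_unitary_mul [Fintype m] [DecidableEq m] [Fintype n] [CommRing α]
    [StarRing α] {U : Matrix m m α} (hU : U ∈ unitaryGroup m α) (C : Matrix m n α)
    (Y : Matrix n l α) :
    (U * C * Y)ᴴ * (U * C * Y) = Yᴴ * (Cᴴ * C) * Y := by
  simp only [conjTranspose_mul, Matrix.mul_assoc]
  rw [← Matrix.mul_assoc Uᴴ, ← star_eq_conjTranspose, Unitary.star_mul_self_of_mem hU,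
    Matrix.one_mul]

theorem mul_unitary_mul_conjTranspose_self [Fintype m] [Fintype n] [DecidableEq n] [CommRing α]
    [StarRing α] {U : Matrix n n α} (hU : U ∈ unitaryGroup n α) (X : Matrix l m α)
    (C : Matrix m n α) :
    (X * C * U) * (X * C * U)ᴴ = X * (C * Cᴴ) * Xᴴ := by
  simp only [conjTranspose_mul, Matrix.mul_assoc]
  rw [← Matrix.mul_assoc U, ← star_eq_conjTranspose, Unitary.mul_star_self_of_mem hU,
    Matrix.one_mul]

end Matrix

theorem IsONB3.transpose_mem_unitaryGroup {a : ZMod 3 → ZMod 3 → ℂ} (ha : IsONB3 a) :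
    (of a)ᵀ ∈ unitaryGroup (ZMod 3) ℂ := by
  rw [mem_unitaryGroup_iff']
  ext j k
  rw [mul_apply', one_apply]
  exact ha j k

theorem IsONB3.mem_unitaryGroup {a : ZMod 3 → ZMod 3 → ℂ} (ha : IsONB3 a) :
    of a ∈ unitaryGroup (ZMod 3) ℂ :=
  transpose_mem_unitaryGroup_iff.mp ha.transpose_mem_unitaryGroup

def amplitudeMatrix (ψ : ZMod 3 × ZMod 3 → ℂ) : Matrix (ZMod 3) (ZMod 3) ℂ :=
  of fun i j => ψ (i, j)

theorem ptrA_vecMulVec_star (ψ : ZMod 3 × ZMod 3 → ℂ) :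
    ptrA (vecMulVec ψ (star ψ)) = ((amplitudeMatrix ψ)ᴴ * amplitudeMatrix ψ)ᵀ := by
  ext j j'
  simp only [ptrA, amplitudeMatrix, of_apply, vecMulVec_apply, Pi.star_apply, transpose_apply,
    mul_apply, conjTranspose_apply, mul_comm]

theorem ptrB_vecMulVec_star (ψ : ZMod 3 × ZMod 3 → ℂ) :
    ptrB (vecMulVec ψ (star ψ)) = amplitudeMatrix ψ * (amplitudeMatrix ψ)ᴴ := by
  ext i i'
  simp only [ptrB, amplitudeMatrix, of_apply, vecMulVec_apply, Pi.star_apply,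
    mul_apply, conjTranspose_apply]

noncomputable def psiCoeff (χ : ZMod 3 → ℂ) : Matrix (ZMod 3) (ZMod 3) ℂ :=
  of fun l n => (Real.sqrt 3 : ℂ)⁻¹ * χ (l + n)

theorem psiCoeff_submatrix_subRight_left_eq_right (χ : ZMod 3 → ℂ) (m : ZMod 3) :
    (psiCoeff χ).submatrix (Equiv.subRight m) id
      = (psiCoeff χ).submatrix id (Equiv.subRight m) := by
  ext l n
  simp only [psiCoeff, submatrix_apply, of_apply, Equiv.subRight_apply, id, sub_add_eq_add_sub,
    add_sub_assoc]

theorem amplitudeMatrix_psi' (χ : ZMod 3 → ℂ) (a b : ZMod 3 → ZMod 3 → ℂ) (m : ZMod 3) :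
    amplitudeMatrix (psi' χ a b m)
      = (of a)ᵀ * (psiCoeff χ).submatrix (Equiv.subRight m) id * of b := by
  ext i j
  simp only [amplitudeMatrix, psi', eta3, tensV, Finset.sum_apply, Pi.smul_apply, smul_eq_mul,
    mul_apply, of_apply, transpose_apply, submatrix_apply, id, psiCoeff, Equiv.subRight_apply,
    Finset.mul_sum, Finset.sum_mul]
  rw [Finset.sum_comm]
  conv_rhs => rw [Finset.sum_comm]
  refine Finset.sum_congr rfl fun l _ => ?_
  rw [← Equiv.sum_comp (Equiv.addLeft l)]
  refine Finset.sum_congr rfl fun n _ => ?_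
  simp only [Equiv.coe_addLeft, add_sub_cancel_left, sub_add_eq_add_sub]
  ring

theorem ptrA_psi' (χ : ZMod 3 → ℂ) {a : ZMod 3 → ZMod 3 → ℂ} (ha : IsONB3 a)
    (b : ZMod 3 → ZMod 3 → ℂ) (m : ZMod 3) :
    ptrA (vecMulVec (psi' χ a b m) (star (psi' χ a b m)))
      = ((of b)ᴴ * ((psiCoeff χ)ᴴ * psiCoeff χ) * of b)ᵀ := by
  rw [ptrA_vecMulVec_star, amplitudeMatrix_psi',
    conjTranspose_mul_self_unitary_mul ha.transpose_mem_unitaryGroup,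
    conjTranspose_mul_self_submatrix_equiv]

theorem ptrB_psi' (χ : ZMod 3 → ℂ) (a : ZMod 3 → ZMod 3 → ℂ) {b : ZMod 3 → ZMod 3 → ℂ}
    (hb : IsONB3 b) (m : ZMod 3) :
    ptrB (vecMulVec (psi' χ a b m) (star (psi' χ a b m)))
      = (of a)ᵀ * (psiCoeff χ * (psiCoeff χ)ᴴ) * ((of a)ᵀ)ᴴ := by
  rw [ptrB_vecMulVec_star, amplitudeMatrix_psi', psiCoeff_submatrix_subRight_left_eq_right,
    mul_unitary_mul_conjTranspose_self hb.mem_unitaryGroup,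
    mul_conjTranspose_self_submatrix_equiv]

theorem ptr_psi'_independent_general (χ : ZMod 3 → ℂ)
    (a b : ZMod 3 → ZMod 3 → ℂ) (ha : IsONB3 a) (hb : IsONB3 b) :
    (∀ m m' : ZMod 3,
        ptrA (Matrix.vecMulVec (psi' χ a b m) (star (psi' χ a b m)))
          = ptrA (Matrix.vecMulVec (psi' χ a b m') (star (psi' χ a b m')))) ∧
    (∀ m m' : ZMod 3,
        ptrB (Matrix.vecMulVec (psi' χ a b m) (star (psi' χ a b m)))
          = ptrB (Matrix.vecMulVec (psi' χ a b m') (star (psi' χ a b m')))) :=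
  ⟨fun m m' => by rw [ptrA_psi' χ ha, ptrA_psi' χ ha],
    fun m m' => by rw [ptrB_psi' χ a hb, ptrB_psi' χ a hb]⟩

/-- Both partial traces of `|ψ'_m⟩⟨ψ'_m|` are independent of `m`. -/
theorem ptr_psi'_independent (χ : ZMod 3 → ℂ) (hχ : ∑ k : ZMod 3, ‖χ k‖ ^ 2 = 1)
    (a b : ZMod 3 → ZMod 3 → ℂ) (ha : IsONB3 a) (hb : IsONB3 b) :
    (∀ m m' : ZMod 3,
        ptrA (Matrix.vecMulVec (psi' χ a b m) (star (psi' χ a b m)))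
          = ptrA (Matrix.vecMulVec (psi' χ a b m') (star (psi' χ a b m')))) ∧
    (∀ m m' : ZMod 3,
        ptrB (Matrix.vecMulVec (psi' χ a b m) (star (psi' χ a b m)))
          = ptrB (Matrix.vecMulVec (psi' χ a b m') (star (psi' χ a b m')))) :=
  ptr_psi'_independent_general χ a b ha hb
end

section
/- Let H ⊆ K be finite-dimensional Hilbert spaces with dim K ≥ |J| where J is a finite index set, and let {E_j : j ∈ J} be a rank-one POVM on H, i.e., E_j = |π_j⟩⟨π_j| with Σ_j E_j = Id_H and |J| = dim K. Then there exists an orthonormal basis {|v_j⟩ : j ∈ J} of K such that P|v_j⟩ = |π_j⟩ for all j, where P is the orthogonal projection from K onto H. -/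
open scoped BigOperators InnerProductSpace

/-!
The analysis operator `x ↦ (⟪π j, x⟫)_j` of a Parseval frame `π` of `H` is an isometry
`H → ℂ^J`. Since `dim K = |J|`, it extends to a unitary `U : K ≃ ℂ^J`, and `v j := U⁻¹ e_j`
is an orthonormal basis of `K` with `⟪v j, w⟫ = ⟪e_j, U w⟫ = ⟪π j, w⟫` for `w ∈ H`, which says
exactly that `v j` projects to `π j`.
-/

section AnalysisOperator

variable {𝕜 E J : Type*} [RCLike 𝕜] [NormedAddCommGroup E] [InnerProductSpace 𝕜 E]

variable (𝕜) in
def analysisOperator (π : J → E) : E →ₗ[𝕜] EuclideanSpace 𝕜 J where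
  toFun x := WithLp.toLp 2 fun j => ⟪π j, x⟫_𝕜
  map_add' x y := by ext j; simp [inner_add_right]
  map_smul' c x := by ext j; simp [inner_smul_right]

@[simp]
theorem analysisOperator_apply (π : J → E) (x : E) (j : J) :
    analysisOperator 𝕜 π x j = ⟪π j, x⟫_𝕜 :=
  rfl

theorem inner_analysisOperator_of_parseval [Fintype J] {π : J → E}
    (hπ : ∀ x, ∑ j, ⟪π j, x⟫_𝕜 • π j = x) (x y : E) :
    ⟪analysisOperator 𝕜 π x, analysisOperator 𝕜 π y⟫_𝕜 = ⟪x, y⟫_𝕜 := by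
  conv_rhs => rw [← hπ y]
  simp [PiLp.inner_apply, inner_sum, inner_smul_right, mul_comm]

end AnalysisOperator

theorem LinearIsometry.exists_linearIsometryEquiv_extend {𝕜 V W : Type*} [RCLike 𝕜]
    [NormedAddCommGroup V] [InnerProductSpace 𝕜 V] [FiniteDimensional 𝕜 V]
    [NormedAddCommGroup W] [InnerProductSpace 𝕜 W] [FiniteDimensional 𝕜 W]
    {S : Submodule 𝕜 V} (L : S →ₗᵢ[𝕜] W) (h : Module.finrank 𝕜 V = Module.finrank 𝕜 W) :
    ∃ U : V ≃ₗᵢ[𝕜] W, ∀ s : S, U s = L s := by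
  let e : W ≃ₗᵢ[𝕜] V :=
    (stdOrthonormalBasis 𝕜 W).equiv (stdOrthonormalBasis 𝕜 V) (finCongr h.symm)
  let M := (e.toLinearIsometry.comp L).extend
  let M' : V ≃ₗᵢ[𝕜] V := .ofSurjective M (LinearMap.injective_iff_surjective.mp M.injective)
  refine ⟨M'.trans e.symm, fun s => ?_⟩
  simp [M', M, LinearIsometry.extend_apply]

theorem Submodule.orthogonalProjectionOnto_eq_of_inner_eq {𝕜 E : Type*} [RCLike 𝕜]
    [NormedAddCommGroup E] [InnerProductSpace 𝕜 E] {K : Submodule 𝕜 E} [K.HasOrthogonalProjection]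
    {v : E} {u : K} (h : ∀ w : K, ⟪v, w⟫_𝕜 = ⟪u, w⟫_𝕜) : K.orthogonalProjectionOnto v = u :=
  ext_inner_right 𝕜 fun w => by rw [inner_orthogonalProjectionOnto_eq_of_mem_right, h]

/-- Naimark's dilation theorem for rank-one POVMs: a rank-one POVM
`{|π_j⟩⟨π_j| : j ∈ J}` on a subspace `H` of a Hilbert space `K` with `|J| = dim K`
extends to a projective measurement given by an orthonormal basis `{|v_j⟩}` of `K`
with `P|v_j⟩ = |π_j⟩`, where `P` is the orthogonal projection onto `H`. -/
theorem naimark_rank_one {K : Type*} [NormedAddCommGroup K] [InnerProductSpace ℂ K]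
    [FiniteDimensional ℂ K] (H : Submodule ℂ K) {J : Type*} [Fintype J]
    (π : J → H)
    (hpovm : ∀ x : H, ∑ j, ⟪π j, x⟫_ℂ • π j = x)
    (hcard : Fintype.card J = Module.finrank ℂ K) :
    ∃ v : J → K, Orthonormal ℂ v ∧ Submodule.span ℂ (Set.range v) = ⊤ ∧
      ∀ j, H.orthogonalProjectionOnto (v j) = π j := by
  let T := (analysisOperator ℂ π).isometryOfInner (inner_analysisOperator_of_parseval hpovm)
  obtain ⟨U, hU⟩ := T.exists_linearIsometryEquiv_extend (by simp [hcard])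
  let b := (EuclideanSpace.basisFun J ℂ).map U.symm
  refine ⟨b, b.orthonormal, by simpa using b.toBasis.span_eq, fun j => ?_⟩
  refine Submodule.orthogonalProjectionOnto_eq_of_inner_eq fun w => ?_
  simp [b, LinearIsometryEquiv.inner_map_eq_flip, hU, T]
end
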